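/- For self-adjoint operators S_1, …, S_s on ℂ^d and a fixed orthonormal basis (q_i), the sum Σ_i S_i is majorized by Σ_i S_i↓, where S↓ := Σ_j λ_j(S)|q_j⟩⟨q_j| with eigenvalues ordered non-increasingly. -/

import Mathlib

/-! Fan's maximum principle: for Hermitian `A` and a rank-`k` projector `P`,
`re tr(A P) ≤ ∑_{j<k} λ↓_j(A)`. Indeed, in the eigenbasis of `A` one has
`tr(A P) = ∑_m λ_m c_m` with weights `0 ≤ c_m ≤ 1` summing to `k`, and such a weighted sum is at
most the sum of the `k` largest `λ_m`.

Given `t` with `#t = k`, let `P` be the spectral projector of `∑ S_i` onto its eigenvectors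
indexed by `t`. Then `∑_{j∈t} λ_j(∑ S_i) = ∑_i tr(S_i P) ≤ ∑_i ∑_{j<k} λ↓_j(S_i)`, which is the
trace of the diagonal matrix `∑ S_i↓` against the projector onto the first `k` basis vectors;
a second application of Fan's principle bounds it by a `k`-term sum of eigenvalues of `∑ S_i↓`.
The totals agree because both are traces. -/

open Finset Matrix
open scoped Kronecker ComplexOrder

/-- `x` majorizes `y`: every subset-sum of `y` is dominated by some subset-sum of `x`
of the same cardinality (equivalently, all top-`k` partial sums of the non-increasing
rearrangements dominate), and the total sums agree. -/
def Majorizes {ι κ : Type*} [Fintype ι] [Fintype κ] (x : ι → ℝ) (y : κ → ℝ) : Prop :=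
  (∀ t : Finset κ, ∃ s : Finset ι, s.card = t.card ∧ ∑ j ∈ t, y j ≤ ∑ i ∈ s, x i) ∧
    ∑ j, y j = ∑ i, x i
/-- The non-increasing rearrangement `x↓` of a vector `x ∈ ℝ^d`. -/
noncomputable def sortDesc {d : ℕ} (x : Fin d → ℝ) : Fin d → ℝ :=
  x ∘ ⇑(Tuple.sort (fun j => OrderDual.toDual (x j)))

/-- `S↓`: the diagonal matrix (in the fixed standard basis) whose diagonal consists of the
eigenvalues of `S` in non-increasing order. -/
noncomputable def matDown {d : ℕ} {S : Matrix (Fin d) (Fin d) ℂ} (hS : S.IsHermitian) :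
    Matrix (Fin d) (Fin d) ℂ :=
  Matrix.diagonal fun i => (sortDesc hS.eigenvalues i : ℂ)

lemma sum_mul_le_sum_of_threshold {ι : Type*} [Fintype ι] [DecidableEq ι] {x c : ι → ℝ}
    {s : Finset ι} {τ : ℝ} (hs : ∀ i ∈ s, τ ≤ x i) (hsc : ∀ i ∉ s, x i ≤ τ)
    (hc₀ : ∀ i, 0 ≤ c i) (hc₁ : ∀ i, c i ≤ 1) (hc : ∑ i, c i = #s) :
    ∑ i, x i * c i ≤ ∑ i ∈ s, x i := by
  have hterm : ∀ i, (x i - τ) * (c i - if i ∈ s then 1 else 0) ≤ 0 := by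
    intro i
    split_ifs with hi
    · exact mul_nonpos_of_nonneg_of_nonpos (by linarith [hs i hi]) (by linarith [hc₁ i])
    · exact mul_nonpos_of_nonpos_of_nonneg (by linarith [hsc i hi]) (by linarith [hc₀ i])
  have hsum := sum_nonpos fun i (_ : i ∈ univ) => hterm i
  simp only [sub_mul, mul_sub, mul_ite, mul_one, mul_zero, sum_sub_distrib,
    sum_ite_mem, univ_inter, ← mul_sum, hc, sum_const, nsmul_eq_mul] at hsum
  linarith

lemma Antitone.sum_mul_le_sum_filter_lt {d k : ℕ} {y c : Fin d → ℝ} (hy : Antitone y)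
    (hc₀ : ∀ i, 0 ≤ c i) (hc₁ : ∀ i, c i ≤ 1) (hc : ∑ i, c i = k) :
    ∑ i, y i * c i ≤ ∑ i : Fin d with i.val < k, y i := by
  have hkd : k ≤ d := by
    have := sum_le_sum fun i (_ : i ∈ univ) => hc₁ i
    simp only [hc, sum_const, card_univ, Fintype.card_fin, nsmul_eq_mul, mul_one] at this
    exact_mod_cast this
  rcases Nat.eq_zero_or_pos d with rfl | hd
  · simp
  refine sum_mul_le_sum_of_threshold (τ := y ⟨min k (d - 1), by omega⟩) ?_ ?_ hc₀ hc₁ ?_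
  · intro i hi
    simp only [mem_filter, mem_univ, true_and] at hi
    exact hy (by simp only [Fin.le_def]; omega)
  · intro i hi
    simp only [mem_filter, mem_univ, true_and, not_lt] at hi
    exact hy (by simp only [Fin.le_def]; omega)
  · rw [hc, Fin.card_filter_val_lt, min_eq_right hkd]

lemma antitone_sortDesc {d : ℕ} (x : Fin d → ℝ) : Antitone (sortDesc x) :=
  monotone_toDual_comp_iff.mp (Tuple.monotone_sort fun j => OrderDual.toDual (x j))

lemma sum_mul_le_sum_sortDesc {d k : ℕ} {x c : Fin d → ℝ}
    (hc₀ : ∀ i, 0 ≤ c i) (hc₁ : ∀ i, c i ≤ 1) (hc : ∑ i, c i = k) :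
    ∑ i, x i * c i ≤ ∑ i : Fin d with i.val < k, sortDesc x i := by
  set σ := Tuple.sort fun j => OrderDual.toDual (x j)
  rw [← Equiv.sum_comp σ]
  exact (antitone_sortDesc x).sum_mul_le_sum_filter_lt (fun i => hc₀ (σ i)) (fun i => hc₁ (σ i))
    (by rw [Equiv.sum_comp σ c, hc])

lemma exists_card_eq_sum_sortDesc_eq {d k : ℕ} (x : Fin d → ℝ) (hk : k ≤ d) :
    ∃ s : Finset (Fin d), #s = k ∧ ∑ i : Fin d with i.val < k, sortDesc x i = ∑ i ∈ s, x i := by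
  set σ := Tuple.sort fun j => OrderDual.toDual (x j)
  refine ⟨({i : Fin d | i.val < k} : Finset (Fin d)).map σ.toEmbedding, ?_, ?_⟩
  · rw [card_map, Fin.card_filter_val_lt, min_eq_right hk]
  · rw [sum_map]
    rfl

lemma sum_sortDesc {d : ℕ} (x : Fin d → ℝ) : ∑ i, sortDesc x i = ∑ i, x i :=
  Equiv.sum_comp _ x

namespace Matrix

variable {𝕜 n : Type*} [RCLike 𝕜] [Fintype n] [DecidableEq n]

/-- For unitary `V`, the orthogonal projector onto the span of the columns of `V` indexed by `t`. -/
def colProj (V : Matrix n n 𝕜) (t : Finset n) : Matrix n n 𝕜 :=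
  V * diagonal (fun j => if j ∈ t then 1 else 0) * Vᴴ

lemma colProj_apply_self (W : Matrix n n 𝕜) (t : Finset n) (i : n) :
    colProj W t i i = ((∑ j ∈ t, ‖W i j‖ ^ 2 : ℝ) : 𝕜) := by
  rw [colProj, mul_apply]
  simp only [mul_diagonal, conjTranspose_apply, RCLike.star_def, mul_ite, mul_one, mul_zero,
    ite_mul, zero_mul, RCLike.mul_conj, sum_ite_mem, univ_inter]
  push_cast
  rfl

lemma colProj_one (t : Finset n) :
    colProj (1 : Matrix n n 𝕜) t = diagonal fun j => if j ∈ t then 1 else 0 := by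
  simp [colProj]

lemma colProj_conjTranspose_mul (U V : Matrix n n 𝕜) (t : Finset n) :
    colProj (Uᴴ * V) t = Uᴴ * colProj V t * U := by
  simp [colProj, conjTranspose_mul, Matrix.mul_assoc]

lemma sum_norm_sq_row_eq_one {W : Matrix n n 𝕜} (hW : W ∈ unitaryGroup n 𝕜) (i : n) :
    ∑ j, ‖W i j‖ ^ 2 = 1 := by
  have h := congrFun₂ (mem_unitaryGroup_iff.mp hW) i i
  simp only [mul_apply, star_apply, RCLike.star_def, RCLike.mul_conj, one_apply_eq] at h
  exact_mod_cast h

lemma sum_norm_sq_col_eq_one {W : Matrix n n 𝕜} (hW : W ∈ unitaryGroup n 𝕜) (j : n) :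
    ∑ i, ‖W i j‖ ^ 2 = 1 := by
  have h := congrFun₂ (mem_unitaryGroup_iff'.mp hW) j j
  simp only [mul_apply, star_apply, RCLike.star_def, RCLike.conj_mul, one_apply_eq] at h
  exact_mod_cast h

lemma trace_diagonal_mul (f : n → 𝕜) (B : Matrix n n 𝕜) :
    (diagonal f * B).trace = ∑ i, f i * B i i := by
  simp [trace, diagonal_mul]

lemma re_trace_diagonal_mul_colProj_one (f : n → ℝ) (t : Finset n) :
    RCLike.re (diagonal (fun i => (f i : 𝕜)) * colProj 1 t).trace = ∑ i ∈ t, f i := by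
  simp [colProj_one, sum_ite_mem]

namespace IsHermitian

lemma re_trace {A : Matrix n n 𝕜} (hA : A.IsHermitian) :
    RCLike.re A.trace = ∑ i, hA.eigenvalues i := by
  simp [hA.trace_eq_sum_eigenvalues]

lemma trace_mul_colProj {A : Matrix n n 𝕜} (hA : A.IsHermitian)
    (V : Matrix n n 𝕜) (t : Finset n) :
    (A * colProj V t).trace = ((∑ i, hA.eigenvalues i *
      ∑ j ∈ t, ‖((hA.eigenvectorUnitary : Matrix n n 𝕜)ᴴ * V) i j‖ ^ 2 : ℝ) : 𝕜) := by
  set U : Matrix n n 𝕜 := (hA.eigenvectorUnitary : Matrix n n 𝕜)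
  calc (A * colProj V t).trace
      = (diagonal (RCLike.ofReal ∘ hA.eigenvalues) * colProj (Uᴴ * V) t).trace := by
        conv_lhs => rw [hA.spectral_theorem, Unitary.conjStarAlgAut_apply]
        rw [colProj_conjTranspose_mul, ← star_eq_conjTranspose]
        simp only [Matrix.mul_assoc]
        rw [trace_mul_comm U]
        simp only [Matrix.mul_assoc]
        rfl
    _ = _ := by
        simp only [trace_diagonal_mul, colProj_apply_self, Function.comp_apply]
        push_cast
        rfl

lemma re_trace_mul_colProj_eigenvectorUnitary {A : Matrix n n 𝕜}
    (hA : A.IsHermitian) (t : Finset n) :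
    RCLike.re (A * colProj (hA.eigenvectorUnitary : Matrix n n 𝕜) t).trace =
      ∑ i ∈ t, hA.eigenvalues i := by
  rw [hA.trace_mul_colProj, RCLike.ofReal_re, ← star_eq_conjTranspose,
    Unitary.coe_star_mul_self]
  simp [one_apply, apply_ite, sum_ite_mem]

theorem re_trace_mul_colProj_le {d : ℕ} {A : Matrix (Fin d) (Fin d) 𝕜} (hA : A.IsHermitian)
    {V : Matrix (Fin d) (Fin d) 𝕜} (hV : V ∈ unitaryGroup (Fin d) 𝕜) (t : Finset (Fin d)) :
    RCLike.re (A * colProj V t).trace ≤ ∑ i : Fin d with i.val < #t, sortDesc hA.eigenvalues i := by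
  set W := (hA.eigenvectorUnitary : Matrix (Fin d) (Fin d) 𝕜)ᴴ * V
  have hW : W ∈ unitaryGroup (Fin d) 𝕜 :=
    mul_mem (Unitary.star_mem hA.eigenvectorUnitary.2) hV
  rw [hA.trace_mul_colProj, RCLike.ofReal_re]
  refine sum_mul_le_sum_sortDesc (fun i => sum_nonneg fun j _ => sq_nonneg _) (fun i => ?_) ?_
  · calc ∑ j ∈ t, ‖W i j‖ ^ 2 ≤ ∑ j, ‖W i j‖ ^ 2 :=
          sum_le_univ_sum_of_nonneg fun j => sq_nonneg _
      _ = 1 := sum_norm_sq_row_eq_one hW i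
  · rw [sum_comm, sum_congr rfl fun j _ => sum_norm_sq_col_eq_one hW j]
    simp

end IsHermitian

end Matrix

lemma sum_matDown {d s : ℕ} {S : Fin s → Matrix (Fin d) (Fin d) ℂ}
    (hS : ∀ i, (S i).IsHermitian) :
    ∑ i, matDown (hS i) = diagonal fun j => ((∑ i, sortDesc (hS i).eigenvalues j : ℝ) : ℂ) := by
  ext j k
  rcases eq_or_ne j k with rfl | hjk
  · simp [matDown, Matrix.sum_apply]
  · simp [matDown, Matrix.sum_apply, diagonal_apply_ne _ hjk]

/-- Ky Fan's majorization relation: `Σ_i S_i` is majorized by `Σ_i S_i↓`. -/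
theorem sum_majorized_by_sum_down {d s : ℕ} (S : Fin s → Matrix (Fin d) (Fin d) ℂ)
    (hS : ∀ i, (S i).IsHermitian)
    (h₁ : (∑ i, matDown (hS i)).IsHermitian) (h₂ : (∑ i, S i).IsHermitian) :
    Majorizes h₁.eigenvalues h₂.eigenvalues := by
  set U : Matrix (Fin d) (Fin d) ℂ := (h₂.eigenvectorUnitary : Matrix (Fin d) (Fin d) ℂ)
  refine ⟨fun t => ?_, ?_⟩
  · set F : Finset (Fin d) := {i : Fin d | i.val < #t}
    have htd : #t ≤ d := by simpa using card_le_univ t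
    have hF : #F = #t := by rw [Fin.card_filter_val_lt, min_eq_right htd]
    obtain ⟨u, hu, hsum⟩ := exists_card_eq_sum_sortDesc_eq h₁.eigenvalues htd
    refine ⟨u, hu, ?_⟩
    calc ∑ j ∈ t, h₂.eigenvalues j
        = ∑ i, RCLike.re (S i * colProj U t).trace := by
          rw [← h₂.re_trace_mul_colProj_eigenvectorUnitary, sum_mul, trace_sum, map_sum]
      _ ≤ ∑ i, ∑ j ∈ F, sortDesc (hS i).eigenvalues j :=
          sum_le_sum fun i _ => (hS i).re_trace_mul_colProj_le h₂.eigenvectorUnitary.2 t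
      _ = RCLike.re ((∑ i, matDown (hS i)) * colProj 1 F).trace := by
          rw [sum_matDown, sum_comm]
          exact (re_trace_diagonal_mul_colProj_one _ F).symm
      _ ≤ ∑ j ∈ F, sortDesc h₁.eigenvalues j := by
          simpa only [hF] using h₁.re_trace_mul_colProj_le (one_mem _) F
      _ = ∑ j ∈ u, h₁.eigenvalues j := hsum
  · calc ∑ j, h₂.eigenvalues j
        = ∑ i, ∑ j, sortDesc (hS i).eigenvalues j := by
          simp only [← h₂.re_trace, trace_sum, map_sum, (hS _).re_trace, sum_sortDesc]
      _ = ∑ j, h₁.eigenvalues j := by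
          rw [← h₁.re_trace, sum_matDown, trace_diagonal, sum_comm]
          simp
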